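/- For every M ∈ Sp₄(ℤ) and every A ∈ SL₂(ℤ) one has φ(M·u(A)) = φ(M)·A, φ(M·d(A)) = A′·φ(M), ν(M·u(A)) = ν(M), and ν(M·d(A)) = ν(M). -/
import Mathlib


open Matrix

/-- Index type for `4×4` matrices written in `2×2` blocks. -/
abbrev Idx := Fin 2 ⊕ Fin 2

/-- The symplectic form `J = ((0, I₂), (−I₂, 0))` in `2×2` block form. -/
def Jp : Matrix Idx Idx ℤ := Matrix.fromBlocks 0 1 (-1) 0

/-- `M ∈ Sp₄(ℤ)`, i.e. `Mᵀ · J · M = J`. -/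
def IsSp4 (M : Matrix Idx Idx ℤ) : Prop := Mᵀ * Jp * M = Jp

/-- Determinant of the `2×2` matrix with columns `u` and `v`. -/
def dcol (u v : Fin 2 → ℤ) : ℤ := u 0 * v 1 - u 1 * v 0

/-- `φ(M) = ((det(C₁|D₂), det D), (det C, det(D₁|C₂)))` where `C`, `D` are the lower-left
and lower-right `2×2` blocks of `M`, with columns `C₁, C₂` resp. `D₁, D₂`. -/
def phi (M : Matrix Idx Idx ℤ) : Matrix (Fin 2) (Fin 2) ℤ :=
  !![dcol (fun i => M.toBlocks₂₁ i 0) (fun i => M.toBlocks₂₂ i 1), (M.toBlocks₂₂).det;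
     (M.toBlocks₂₁).det, dcol (fun i => M.toBlocks₂₂ i 0) (fun i => M.toBlocks₂₁ i 1)]

/-- `ν(M) = det(C₁|D₁)`. -/
def nu (M : Matrix Idx Idx ℤ) : ℤ :=
  dcol (fun i => M.toBlocks₂₁ i 0) (fun i => M.toBlocks₂₂ i 0)

/-- The embedding `u : SL₂ → Sp₄`, `u(A)` has rows `(a,0,b,0), (0,1,0,0), (c,0,d,0), (0,0,0,1)`. -/
def uEmb (A : Matrix (Fin 2) (Fin 2) ℤ) : Matrix Idx Idx ℤ :=
  Matrix.fromBlocks !![A 0 0, 0; 0, 1] !![A 0 1, 0; 0, 0] !![A 1 0, 0; 0, 0] !![A 1 1, 0; 0, 1]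

/-- The embedding `d : SL₂ → Sp₄`, `d(A)` has rows `(1,0,0,0), (0,a,0,b), (0,0,1,0), (0,c,0,d)`. -/
def dEmb (A : Matrix (Fin 2) (Fin 2) ℤ) : Matrix Idx Idx ℤ :=
  Matrix.fromBlocks !![1, 0; 0, A 0 0] !![0, 0; 0, A 0 1] !![0, 0; 0, A 1 0] !![1, 0; 0, A 1 1]

/-- `A′ = ((d,b),(c,a))` for `A = ((a,b),(c,d))`. -/
def primed (A : Matrix (Fin 2) (Fin 2) ℤ) : Matrix (Fin 2) (Fin 2) ℤ :=
  !![A 1 1, A 0 1; A 1 0, A 0 0]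

/-- For every `M ∈ Sp₄(ℤ)` and every `A ∈ SL₂(ℤ)`:
`φ(M·u(A)) = φ(M)·A`, `φ(M·d(A)) = A′·φ(M)`, `ν(M·u(A)) = ν(M)` and `ν(M·d(A)) = ν(M)`. -/
theorem phi_nu_mul_uEmb_dEmb (M : Matrix Idx Idx ℤ) (hM : IsSp4 M)
    (A : Matrix.SpecialLinearGroup (Fin 2) ℤ) :
    phi (M * uEmb (A : Matrix (Fin 2) (Fin 2) ℤ)) = phi M * (A : Matrix (Fin 2) (Fin 2) ℤ) ∧
    phi (M * dEmb (A : Matrix (Fin 2) (Fin 2) ℤ)) =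
      primed (A : Matrix (Fin 2) (Fin 2) ℤ) * phi M ∧
    nu (M * uEmb (A : Matrix (Fin 2) (Fin 2) ℤ)) = nu M ∧
    nu (M * dEmb (A : Matrix (Fin 2) (Fin 2) ℤ)) = nu M := by
  
  have hA : (A : Matrix (Fin 2) (Fin 2) ℤ) 0 0 * (A : Matrix (Fin 2) (Fin 2) ℤ) 1 1 -
      (A : Matrix (Fin 2) (Fin 2) ℤ) 0 1 * (A : Matrix (Fin 2) (Fin 2) ℤ) 1 0 = 1 := by
    have := A.2
    rw [Matrix.det_fin_two] at this
    exact this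
  refine ⟨?_, ?_, ?_, ?_⟩
  · ext i j
    fin_cases i <;> fin_cases j <;>
      simp [phi, dcol, uEmb, Matrix.mul_apply, Matrix.toBlocks₂₁, Matrix.toBlocks₂₂,
        Fintype.sum_sum_type, Fin.sum_univ_two, Matrix.det_fin_two] <;> ring
  · ext i j
    fin_cases i <;> fin_cases j <;>
      simp [phi, dcol, dEmb, primed, Matrix.mul_apply, Matrix.toBlocks₂₁, Matrix.toBlocks₂₂,
        Fintype.sum_sum_type, Fin.sum_univ_two, Matrix.det_fin_two] <;> ring
  · simp only [nu, dcol, uEmb, Matrix.mul_apply, Matrix.toBlocks₂₁, Matrix.toBlocks₂₂,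
      Fintype.sum_sum_type, Fin.sum_univ_two, Matrix.of_apply, Matrix.fromBlocks_apply₂₁,
      Matrix.fromBlocks_apply₂₂, Matrix.fromBlocks_apply₁₁, Matrix.fromBlocks_apply₁₂,
      Matrix.cons_val', Matrix.cons_val_zero, Matrix.cons_val_one,
      Matrix.head_cons, Matrix.head_fin_const, Matrix.empty_val', Matrix.cons_val_fin_one]
    linear_combination (M (Sum.inr 0) (Sum.inl 0) * M (Sum.inr 1) (Sum.inr 0) -
      M (Sum.inr 1) (Sum.inl 0) * M (Sum.inr 0) (Sum.inr 0)) * hA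
  · simp [nu, dcol, dEmb, Matrix.mul_apply, Matrix.toBlocks₂₁, Matrix.toBlocks₂₂,
      Fintype.sum_sum_type, Fin.sum_univ_two]
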